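/- Let M = (N, I) be a finite matroid whose ground set has size at most n, let ρ_M be its rank-density curve, and let ρ̃ be an (α, β)-approximation of ρ_M with α ∈ ℝ, α ≥ 24, and β an integer with β ≥ 3. Then there exist non-increasing functions ρ̄, ρ̄_1, ρ̄_2, ρ̄_3, ρ̄_4 : ℝ>0 → ℝ≥0 such that: (1) ρ̄ is an (α², β²)-approximation of ρ_M; (2) F(ρ̄_1) + F(ρ̄_2) + F(ρ̄_3) + F(ρ̄_4) ≥ F(ρ̄); and (3) for each i ∈ {1,2,3,4}, ρ̄_i ≤ ρ_M, every nonzero value of ρ̄_i is a nonnegative integer power of β, and if μ_1 > μ_2 > … > μ_ℓ are the nonzero values of ρ̄_i, then r(D_M(N, μ_{j+1})) ≥ α·r(D_M(N, μ_j/β)) for every j ∈ {1, …, ℓ−1}. -/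

import Mathlib

open scoped BigOperators Classical
open MeasureTheory

noncomputable section

/-- A finite matroid on ground set `E`, given by its rank function. -/
structure FinMatroid (α : Type*) [DecidableEq α] where
  E : Finset α
  r : Finset α → ℕ
  rank_le_card : ∀ A : Finset α, r A ≤ A.card
  rank_mono : ∀ ⦃A B : Finset α⦄, A ⊆ B → r A ≤ r B
  rank_submod : ∀ A B : Finset α, r (A ∪ B) + r (A ∩ B) ≤ r A + r B

variable {α : Type*} [DecidableEq α]

/-- Independence in terms of the rank function. -/
def FinMatroid.Indep (M : FinMatroid α) (I : Finset α) : Prop :=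
  I ⊆ M.E ∧ M.r I = I.card

/-- The span (closure) of a set. -/
def FinMatroid.span (M : FinMatroid α) (A : Finset α) : Finset α :=
  M.E.filter fun e => M.r (insert e A) = M.r A

/-- `M.D S lam` : the unique inclusion-wise maximal maximizer of `|U| - lam * r U`
over `U ⊆ S`, realized as the union of all maximizers. -/
def FinMatroid.D (M : FinMatroid α) (S : Finset α) (lam : ℝ) : Finset α :=
  (S.powerset.filter fun U =>
      ∀ V ∈ S.powerset, (V.card : ℝ) - lam * M.r V ≤ (U.card : ℝ) - lam * M.r U).sup id

/-- The rank-density curve of `M`. -/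
def FinMatroid.rdCurve (M : FinMatroid α) : ℝ → ℝ := fun t =>
  sSup {lam : ℝ | 0 ≤ lam ∧ t ≤ (M.r (M.D M.E lam) : ℝ)}

/-- Restriction of a matroid to a subset. -/
def FinMatroid.restrict (M : FinMatroid α) (T : Finset α) : FinMatroid α where
  E := M.E ∩ T
  r := fun A => M.r (A ∩ T)
  rank_le_card := fun A =>
    (M.rank_le_card _).trans (Finset.card_le_card Finset.inter_subset_left)
  rank_mono := fun A B hAB =>
    M.rank_mono (Finset.inter_subset_inter hAB (Finset.Subset.refl T))
  rank_submod := fun A B => by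
    have h1 : (A ∪ B) ∩ T = (A ∩ T) ∪ (B ∩ T) := by ext x; simp only [Finset.mem_inter, Finset.mem_union]; tauto
    have h2 : (A ∩ B) ∩ T = (A ∩ T) ∩ (B ∩ T) := by ext x; simp only [Finset.mem_inter]; tauto
    rw [h1, h2]; exact M.rank_submod _ _

/-- `eta n w a` : the expected maximum weight among a uniformly random subset of
`⌊a⌋` of the `n` weights `w`, with value `0` for `a < 1`. -/
def eta (n : ℕ) (w : Fin n → ℝ) (a : ℝ) : ℝ :=
  if a < 1 then 0 else
    (∑ R ∈ Finset.powersetCard ⌊a⌋.toNat (Finset.univ : Finset (Fin n)),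
        R.fold max 0 w) /
      ((Finset.powersetCard ⌊a⌋.toNat (Finset.univ : Finset (Fin n))).card : ℝ)

/-- `FF n w ρ = ∫_0^∞ η(ρ(t)) dt`. -/
def FF (n : ℕ) (w : Fin n → ℝ) (ρ : ℝ → ℝ) : ℝ :=
  ∫ t in Set.Ioi (0 : ℝ), eta n w (ρ t)

/-- The `(a, b)`-downshift of a curve `ρ`. -/
def downshift (ρ : ℝ → ℝ) (a b : ℝ) : ℝ → ℝ := fun t =>
  let φ : ℝ := if t ≤ 1 then ρ a / b else ρ (a * t) / b
  if 0 < φ ∧ φ < 1 then 1 else φ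

/-- `ρt` is an `(a,b)`-approximation of `ρ`: it is non-increasing and nonnegative on
`(0,∞)` and squeezed between the `(a,b)`-downshift of `ρ` and `ρ` on `(0,∞)`. -/
def IsApprox (a b : ℝ) (ρ ρt : ℝ → ℝ) : Prop :=
  AntitoneOn ρt (Set.Ioi 0) ∧ (∀ t, 0 < t → 0 ≤ ρt t) ∧
    ∀ t, 0 < t → downshift ρ a b t ≤ ρt t ∧ ρt t ≤ ρ t

/-- Probability of event `P` for a random subset `S ⊆ N` including each element
independently with probability `1/2`. -/
def prHalf (N : Finset α) (P : Finset α → Prop) : ℝ :=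
  ((N.powerset.filter P).card : ℝ) / 2 ^ N.card


/-!
Write `r e` for the rank of `D_M(N, b ^ e)`. It is antitone in `e`, vanishes once `b ^ e > |N|`,
and `ρ_M(t) ≥ b ^ e` when `t ≤ r e`, `ρ_M(t) ≤ b ^ e` when `r e < t`. So exponents
`c₁ > c₂ > ⋯` with `r c₁ < r c₂ < ⋯` give a step curve below `ρ_M`, equal to `b ^ cᵢ` on
`(r cᵢ₋₁, r cᵢ]`. Starting from the largest exponent of positive rank, choose exponents greedily
so that each rank is at least `a²` times the previous one and every `t` with `ρ_M(a² t) > b²` has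
a chosen `c` with `t ≤ r c` and `r (c + 2) < a² t`, whence `ρ_M(a² t) / b² ≤ b ^ c`. The chosen
exponents at even and at odd positions give two curves satisfying the spacing condition; with the
constant `1` on `(0, rank M]` and the zero curve, their pointwise maximum dominates the
`(a², b²)`-downshift of `ρ_M`. Finally `η` of a maximum is `η` of one of the curves, which bounds
`F` of the maximum by the sum.
-/

namespace FinMatroid

variable (M : FinMatroid α)

lemma r_empty : M.r ∅ = 0 := Nat.le_zero.mp (by simpa using M.rank_le_card ∅)

lemma r_le_r_add_card_sdiff {S V : Finset α} (hV : V ⊆ S) : M.r S ≤ M.r V + (S \ V).card := by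
  have h := M.rank_submod V (S \ V)
  rw [Finset.union_sdiff_of_subset hV, Finset.inter_sdiff_self, M.r_empty] at h
  linarith [M.rank_le_card (S \ V)]

def IsMaximizer (S : Finset α) (lam : ℝ) (U : Finset α) : Prop :=
  U ⊆ S ∧ ∀ V ⊆ S, (V.card : ℝ) - lam * M.r V ≤ U.card - lam * M.r U

variable {M} {S : Finset α} {lam : ℝ}

lemma exists_isMaximizer (S : Finset α) (lam : ℝ) : ∃ U, M.IsMaximizer S lam U := by
  obtain ⟨U, hU, hmax⟩ := Finset.exists_max_image S.powerset
    (fun U => (U.card : ℝ) - lam * M.r U) ⟨∅, Finset.empty_mem_powerset _⟩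
  exact ⟨U, Finset.mem_powerset.mp hU, fun V hV => hmax V (Finset.mem_powerset.mpr hV)⟩

lemma IsMaximizer.union (hlam : 0 ≤ lam) {U V : Finset α} (hU : M.IsMaximizer S lam U)
    (hV : M.IsMaximizer S lam V) : M.IsMaximizer S lam (U ∪ V) := by
  have hcard : ((U ∪ V).card : ℝ) + (U ∩ V).card = U.card + V.card := by
    exact_mod_cast Finset.card_union_add_card_inter U V
  have hsubmod : (M.r (U ∪ V) : ℝ) + M.r (U ∩ V) ≤ M.r U + M.r V := by
    exact_mod_cast M.rank_submod U V
  have hinter := hU.2 (U ∩ V) (Finset.inter_subset_left.trans hU.1)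
  refine ⟨Finset.union_subset hU.1 hV.1, fun W hW => (hV.2 W hW).trans ?_⟩
  nlinarith

lemma mem_filter_iff_isMaximizer {U : Finset α} :
    U ∈ S.powerset.filter (fun U => ∀ V ∈ S.powerset,
      (V.card : ℝ) - lam * M.r V ≤ U.card - lam * M.r U) ↔ M.IsMaximizer S lam U := by
  simp only [Finset.mem_filter, Finset.mem_powerset, IsMaximizer]

lemma isMaximizer_D (hlam : 0 ≤ lam) : M.IsMaximizer S lam (M.D S lam) := by
  obtain ⟨U, hU⟩ := M.exists_isMaximizer S lam
  exact SupClosed.finsetSup_mem (s := {W | M.IsMaximizer S lam W})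
    (fun _ hU _ hV => hU.union hlam hV) ⟨U, mem_filter_iff_isMaximizer.mpr hU⟩
    fun _ hV => mem_filter_iff_isMaximizer.mp hV

lemma IsMaximizer.subset_D {U : Finset α} (hU : M.IsMaximizer S lam U) : U ⊆ M.D S lam :=
  Finset.le_sup (f := id) (mem_filter_iff_isMaximizer.mpr hU)

lemma D_subset : M.D S lam ⊆ S :=
  Finset.sup_le fun _ hU => Finset.mem_powerset.mp (Finset.mem_filter.mp hU).1

/-- By submodularity, `D S l₁ ∪ D S l₂` is again a maximizer at the smaller density `l₁`. -/
lemma D_anti {l₁ l₂ : ℝ} (h₀ : 0 ≤ l₁) (h₁₂ : l₁ ≤ l₂) : M.D S l₂ ⊆ M.D S l₁ := by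
  set A := M.D S l₁
  set B := M.D S l₂
  have hA : M.IsMaximizer S l₁ A := isMaximizer_D h₀
  have hB : M.IsMaximizer S l₂ B := isMaximizer_D (h₀.trans h₁₂)
  have hcard : ((A ∪ B).card : ℝ) + (A ∩ B).card = A.card + B.card := by
    exact_mod_cast Finset.card_union_add_card_inter A B
  have hsubmod : (M.r (A ∪ B) : ℝ) + M.r (A ∩ B) ≤ M.r A + M.r B := by
    exact_mod_cast M.rank_submod A B
  have hmono : (M.r (A ∩ B) : ℝ) ≤ M.r B := by
    exact_mod_cast M.rank_mono Finset.inter_subset_right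
  have hinter := hB.2 (A ∩ B) (Finset.inter_subset_left.trans hA.1)
  have hunion : M.IsMaximizer S l₁ (A ∪ B) :=
    ⟨Finset.union_subset hA.1 hB.1, fun W hW => (hA.2 W hW).trans (by nlinarith)⟩
  exact Finset.subset_union_right.trans hunion.subset_D

lemma D_eq_self_of_le_one (h₁ : lam ≤ 1) : M.D S lam = S := by
  refine M.D_subset.antisymm (IsMaximizer.subset_D ⟨subset_rfl, fun V hV => ?_⟩)
  have hr : (M.r S : ℝ) ≤ M.r V + (S.card - V.card) := by
    rw [← Nat.cast_sub (Finset.card_le_card hV), ← Finset.card_sdiff_of_subset hV]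
    exact_mod_cast M.r_le_r_add_card_sdiff hV
  have hmono : (M.r V : ℝ) ≤ M.r S := by exact_mod_cast M.rank_mono hV
  nlinarith

lemma r_D_eq_zero_of_card_lt (h : (S.card : ℝ) < lam) : M.r (M.D S lam) = 0 := by
  have hD : M.IsMaximizer S lam (M.D S lam) := isMaximizer_D ((Nat.cast_nonneg _).trans h.le)
  have hempty := hD.2 ∅ (Finset.empty_subset _)
  have hcard : ((M.D S lam).card : ℝ) ≤ S.card := by exact_mod_cast Finset.card_le_card hD.1
  simp only [Finset.card_empty, M.r_empty, Nat.cast_zero, mul_zero, sub_zero] at hempty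
  by_contra hne
  have h1 : (1 : ℝ) ≤ M.r (M.D S lam) := by exact_mod_cast Nat.one_le_iff_ne_zero.mpr hne
  nlinarith

variable (M) in
lemma rdCurve_nonneg (t : ℝ) : 0 ≤ M.rdCurve t :=
  Real.sSup_nonneg fun _ h => h.1

lemma le_rdCurve {t lam : ℝ} (ht : 0 < t) (hlam : 0 ≤ lam) (h : t ≤ M.r (M.D M.E lam)) :
    lam ≤ M.rdCurve t := by
  refine le_csSup ⟨M.E.card, fun mu hmu => le_of_not_gt fun hlt => ?_⟩ ⟨hlam, h⟩
  have hmu₂ := hmu.2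
  rw [r_D_eq_zero_of_card_lt hlt, Nat.cast_zero] at hmu₂
  linarith

lemma rdCurve_le {s mu : ℝ} (hmu : 0 ≤ mu) (h : M.r (M.D M.E mu) < s) : M.rdCurve s ≤ mu := by
  refine Real.sSup_le (fun lam hlam => le_of_not_gt fun hlt => ?_) hmu
  have hr : (M.r (M.D M.E lam) : ℝ) ≤ M.r (M.D M.E mu) := by
    exact_mod_cast M.rank_mono (D_anti hmu hlt.le)
  linarith [hlam.2]

lemma le_r_D_of_lt_rdCurve {s mu : ℝ} (hmu : 0 ≤ mu) (h : mu < M.rdCurve s) :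
    s ≤ M.r (M.D M.E mu) :=
  le_of_not_gt fun h' => (rdCurve_le hmu h').not_gt h

lemma le_rank_of_rdCurve_pos {s : ℝ} (h : 0 < M.rdCurve s) : s ≤ M.r M.E := by
  simpa only [D_eq_self_of_le_one zero_le_one] using le_r_D_of_lt_rdCurve le_rfl h

section PowRank

variable (M)

def powRank (b : ℝ) (e : ℕ) : ℕ := M.r (M.D M.E (b ^ e))

lemma powRank_zero (b : ℝ) : M.powRank b 0 = M.r M.E := by
  rw [powRank, pow_zero, D_eq_self_of_le_one le_rfl]

variable {b : ℝ} {e : ℕ}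

lemma powRank_antitone (hb : 1 ≤ b) : Antitone (M.powRank b) :=
  fun _ _ h => M.rank_mono (D_anti (by positivity) (pow_le_pow_right₀ hb h))

lemma powRank_card_succ (hb : 2 ≤ b) : M.powRank b (M.E.card + 1) = 0 := by
  refine r_D_eq_zero_of_card_lt ?_
  calc (M.E.card : ℝ) < 2 ^ M.E.card := by exact_mod_cast M.E.card.lt_two_pow_self
    _ ≤ 2 ^ (M.E.card + 1) := pow_le_pow_right₀ one_le_two (Nat.le_succ _)
    _ ≤ b ^ (M.E.card + 1) := pow_le_pow_left₀ zero_le_two hb _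

variable {M}

lemma pow_le_rdCurve (hb : 0 ≤ b) {t : ℝ} (ht : 0 < t) (h : t ≤ M.powRank b e) :
    b ^ e ≤ M.rdCurve t :=
  le_rdCurve ht (pow_nonneg hb e) h

lemma rdCurve_le_pow (hb : 0 ≤ b) {s : ℝ} (h : M.powRank b e < s) : M.rdCurve s ≤ b ^ e :=
  rdCurve_le (pow_nonneg hb e) h

lemma le_powRank_of_pow_lt_rdCurve (hb : 0 ≤ b) {s : ℝ} (h : b ^ e < M.rdCurve s) :
    s ≤ M.powRank b e :=
  le_r_D_of_lt_rdCurve (pow_nonneg hb e) h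

end PowRank

end FinMatroid

/-- For exponents `c₁ > c₂ > ⋯` with `r c₁ < r c₂ < ⋯`, the curve equals `b ^ cᵢ` on
`(r cᵢ₋₁, r cᵢ]` and vanishes to the right of `r cₖ`. -/
def stepCurve (r : ℕ → ℕ) (b : ℝ) : List ℕ → ℝ → ℝ
  | [], _ => 0
  | c :: l, t => if t ≤ r c then b ^ c else stepCurve r b l t

section StepCurve

variable {r : ℕ → ℕ} {b : ℝ} {l : List ℕ} {c : ℕ} {t : ℝ}

lemma stepCurve_nonneg (hb : 0 ≤ b) : 0 ≤ stepCurve r b l t := by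
  induction l with
  | nil => exact le_rfl
  | cons d l ih =>
    unfold stepCurve
    split_ifs
    · exact pow_nonneg hb d
    · exact ih

lemma stepCurve_le_pow (hb : 1 ≤ b) (h : ∀ x ∈ l, x ≤ c) : stepCurve r b l t ≤ b ^ c := by
  induction l with
  | nil => exact pow_nonneg (zero_le_one.trans hb) c
  | cons d l ih =>
    unfold stepCurve
    split_ifs
    · exact pow_le_pow_right₀ hb (h d List.mem_cons_self)
    · exact ih fun x hx => h x (List.mem_cons_of_mem d hx)

lemma stepCurve_antitone (hb : 1 ≤ b) (hl : l.Pairwise (· > ·)) : Antitone (stepCurve r b l) := by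
  induction l with
  | nil => exact antitone_const
  | cons d l ih =>
    rw [List.pairwise_cons] at hl
    intro t₁ t₂ h
    unfold stepCurve
    by_cases h₂ : t₂ ≤ r d
    · rw [if_pos h₂, if_pos (h.trans h₂)]
    · rw [if_neg h₂]
      split_ifs
      · exact stepCurve_le_pow hb fun x hx => (hl.1 x hx).le
      · exact ih hl.2 h

lemma exists_mem_eq_pow_of_stepCurve_ne_zero (h : stepCurve r b l t ≠ 0) :
    ∃ c ∈ l, stepCurve r b l t = b ^ c ∧ t ≤ r c := by
  induction l with
  | nil => exact absurd rfl h
  | cons d l ih =>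
    unfold stepCurve at h ⊢
    by_cases ht : t ≤ r d
    · exact ⟨d, List.mem_cons_self, if_pos ht, ht⟩
    · rw [if_neg ht] at h ⊢
      obtain ⟨c, hc, hval, hle⟩ := ih h
      exact ⟨c, List.mem_cons_of_mem d hc, hval, hle⟩

lemma stepCurve_apply_of_mem (hl : l.Pairwise fun u v => r u < r v) (hc : c ∈ l) :
    stepCurve r b l (r c) = b ^ c := by
  induction l with
  | nil => simp at hc
  | cons d l ih =>
    rw [List.pairwise_cons] at hl
    unfold stepCurve
    rcases List.mem_cons.mp hc with rfl | hc
    · exact if_pos le_rfl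
    · rw [if_neg (by exact_mod_cast (hl.1 c hc).not_ge)]
      exact ih hl.2 hc

lemma pow_le_stepCurve (hb : 1 ≤ b) (hl : l.Pairwise (· > ·)) (hc : c ∈ l) (ht : t ≤ r c) :
    b ^ c ≤ stepCurve r b l t := by
  induction l with
  | nil => simp at hc
  | cons d l ih =>
    rw [List.pairwise_cons] at hl
    unfold stepCurve
    rcases List.mem_cons.mp hc with rfl | hc
    · rw [if_pos ht]
    · split_ifs
      · exact pow_le_pow_right₀ hb (hl.1 c hc).le
      · exact ih hl.2 hc

end StepCurve

section Weights

variable {n : ℕ} {w : Fin n → ℝ}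

lemma eta_nonneg (x : ℝ) : 0 ≤ eta n w x := by
  unfold eta
  split_ifs
  · exact le_rfl
  · exact div_nonneg (Finset.sum_nonneg fun R _ => Finset.le_fold_max 0 |>.mpr (Or.inl le_rfl))
      (Nat.cast_nonneg _)

lemma eta_zero : eta n w 0 = 0 := if_pos zero_lt_one

lemma integrableOn_eta_stepCurve (r : ℕ → ℕ) (b : ℝ) (l : List ℕ) :
    IntegrableOn (fun t => eta n w (stepCurve r b l t)) (Set.Ioi 0) := by
  induction l with
  | nil => simpa only [stepCurve, eta_zero] using integrableOn_zero
  | cons c l ih =>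
    have h : (fun t => eta n w (stepCurve r b (c :: l) t)) = (Set.Iic (r c : ℝ)).piecewise
        (fun _ => eta n w (b ^ c)) fun t => eta n w (stepCurve r b l t) := by
      funext t
      by_cases ht : t ≤ r c <;> simp [stepCurve, Set.piecewise, ht]
    rw [h]
    refine Integrable.piecewise measurableSet_Iic ?_ ih.integrableOn
    rw [IntegrableOn, Measure.restrict_restrict measurableSet_Iic]
    have hsub : Set.Iic (r c : ℝ) ∩ Set.Ioi 0 ⊆ Set.Icc 0 (r c) := fun x hx => ⟨hx.2.le, hx.1⟩
    exact integrableOn_const ((measure_mono hsub).trans_lt measure_Icc_lt_top).ne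

lemma FF_sup'_le_sum {ι : Type*} [Fintype ι] [Nonempty ι] {g : ι → ℝ → ℝ}
    (hg : ∀ i, IntegrableOn (fun t => eta n w (g i t)) (Set.Ioi 0)) :
    FF n w (fun t => Finset.univ.sup' Finset.univ_nonempty (g · t)) ≤ ∑ i, FF n w (g i) := by
  unfold FF
  rw [← integral_finsetSum _ fun i _ => hg i]
  refine integral_mono_of_nonneg (ae_of_all _ fun _ => eta_nonneg _)
    (integrable_finsetSum _ fun i _ => hg i) (ae_of_all _ fun t => ?_)
  obtain ⟨i, -, hi⟩ := Finset.exists_mem_eq_sup' Finset.univ_nonempty (g · t)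
  simp only [hi]
  exact Finset.single_le_sum (f := fun j => eta n w (g j t)) (fun j _ => eta_nonneg _)
    (Finset.mem_univ i)

end Weights

def WellSpaced (r : ℕ → ℕ) (a : ℝ) (u v : ℕ) : Prop :=
  v < u ∧ r u < r v ∧ a * r (u - 1) ≤ r v

def altSplit {β : Type*} : List β → List β × List β
  | [] => ([], [])
  | x :: l => (x :: (altSplit l).2, (altSplit l).1)

lemma mem_altSplit_iff {β : Type*} {x : β} {l : List β} :
    x ∈ (altSplit l).1 ∨ x ∈ (altSplit l).2 ↔ x ∈ l := by
  induction l with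
  | nil => simp [altSplit]
  | cons y l ih =>
    simp only [altSplit, List.mem_cons, ← ih]
    tauto

section Chain

variable {r : ℕ → ℕ} {A a : ℝ} {c : ℕ}

/-- `0` when no `m ≤ c` has `A * r c ≤ r m`, hence the guard `0 < chainNext r A c` in `chain`. -/
def chainNext (r : ℕ → ℕ) (A : ℝ) (c : ℕ) : ℕ := Nat.findGreatest (fun e => A * r c ≤ r e) c

lemma chainNext_le : chainNext r A c ≤ c := Nat.findGreatest_le c

lemma le_chainNext {m : ℕ} (hm : m ≤ c) (h : A * r c ≤ r m) : m ≤ chainNext r A c :=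
  Nat.le_findGreatest hm h

lemma mul_le_chainNext (h : 0 < chainNext r A c) : A * r c ≤ r (chainNext r A c) :=
  Nat.findGreatest_of_ne_zero rfl h.ne'

lemma lt_mul_of_chainNext_lt {m : ℕ} (hlt : chainNext r A c < m) (hm : m ≤ c) : r m < A * r c :=
  not_le.mp (Nat.findGreatest_is_greatest hlt hm)

/-- Stepping to `m - 1` for `m = chainNext r A c`, rather than to `m`, keeps
`r (m - 1) ≥ A * r c` while `r ((m - 1) + 2) < A * r c`: this is what the covering needs. -/
def chain (r : ℕ → ℕ) (A : ℝ) (c : ℕ) : List ℕ :=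
  if h : 0 < chainNext r A c then
    (chainNext r A c - 1) :: chain r A (chainNext r A c - 1)
  else []
termination_by c
decreasing_by have := chainNext_le (r := r) (A := A) (c := c); omega

lemma chain_of_pos (h : 0 < chainNext r A c) :
    chain r A c = (chainNext r A c - 1) :: chain r A (chainNext r A c - 1) := by
  rw [chain, dif_pos h]

lemma chain_of_eq_zero (h : chainNext r A c = 0) : chain r A c = [] := by
  rw [chain, dif_neg (by omega)]

lemma mem_chain (hr : Antitone r) (hA : 1 ≤ A) {v : ℕ} (hv : v ∈ chain r A c) :
    A * r c ≤ r v ∧ v < c := by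
  induction c using Nat.strong_induction_on with
  | _ c ih =>
    by_cases h : 0 < chainNext r A c
    · set m := chainNext r A c
      have hm : A * r c ≤ r m := mul_le_chainNext h
      have hm' : (r m : ℝ) ≤ r (m - 1) := by exact_mod_cast hr (Nat.sub_le m 1)
      have hmc : m ≤ c := chainNext_le
      rw [chain_of_pos h] at hv
      rcases List.mem_cons.mp hv with rfl | hv
      · exact ⟨hm.trans hm', by omega⟩
      · obtain ⟨hv₁, hv₂⟩ := ih (m - 1) (by omega) hv
        have hr₀ : (0 : ℝ) ≤ r (m - 1) := Nat.cast_nonneg _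
        exact ⟨by nlinarith, by omega⟩
    · rw [chain_of_eq_zero (by omega)] at hv
      exact absurd hv List.not_mem_nil

/-- Each chain step multiplies the rank by `A`, but `WellSpaced` compares with `r (c - 1)`, which
may be much larger than `r c`; skipping every other element repairs this, since the skipped
exponent is at most `c - 1`. -/
lemma pairwise_wellSpaced_altSplit_chain (hr : Antitone r) (hA : 1 < A) (haA : a ≤ A)
    (hc : 1 ≤ r c) :
    (altSplit (c :: chain r A c)).1.Pairwise (WellSpaced r a) ∧
      (altSplit (c :: chain r A c)).2.Pairwise (WellSpaced r a) := by
  induction c using Nat.strong_induction_on with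
  | _ c ih =>
    by_cases h : 0 < chainNext r A c
    · set m := chainNext r A c
      have hm : A * r c ≤ r m := mul_le_chainNext h
      have hm' : (r m : ℝ) ≤ r (m - 1) := by exact_mod_cast hr (Nat.sub_le m 1)
      have hmc : m ≤ c := chainNext_le
      have hc' : (1 : ℝ) ≤ r c := by exact_mod_cast hc
      have hr₁ : 1 ≤ r (m - 1) := by exact_mod_cast (show (1 : ℝ) ≤ r (m - 1) by nlinarith)
      obtain ⟨ih₁, ih₂⟩ := ih (m - 1) (by omega) hr₁
      rw [chain_of_pos h]
      refine ⟨List.pairwise_cons.mpr ⟨fun v hv => ?_, ih₂⟩, ih₁⟩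
      obtain ⟨hv₁, hv₂⟩ := mem_chain hr hA.le (mem_altSplit_iff.mp (Or.inl hv))
      have hmono : (r (c - 1) : ℝ) ≤ r (m - 1) := by exact_mod_cast hr (by omega)
      have hr₀ : (0 : ℝ) ≤ r (c - 1) := Nat.cast_nonneg _
      refine ⟨by omega, by exact_mod_cast (show (r c : ℝ) < r v by nlinarith), ?_⟩
      nlinarith
    · rw [chain_of_eq_zero (by omega)]
      exact ⟨List.pairwise_singleton _ _, List.Pairwise.nil⟩

lemma exists_mem_chain_cover (hr : Antitone r) (hA : 1 < A) (hc : 1 ≤ r c) {t : ℝ}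
    (hct : r c < t) (ht : A * t ≤ r 2) :
    ∃ c' ∈ chain r A c, t ≤ r c' ∧ r (c' + 2) < A * t := by
  induction c using Nat.strong_induction_on with
  | _ c ih =>
    have hc' : (1 : ℝ) ≤ r c := by exact_mod_cast hc
    have h2c : 2 < c := by
      by_contra! h
      have : (r c : ℝ) ≥ r 2 := by exact_mod_cast hr h
      nlinarith
    have h2 : 2 ≤ chainNext r A c := le_chainNext h2c.le (by nlinarith)
    set m := chainNext r A c
    have hm : A * r c ≤ r m := mul_le_chainNext (by omega)
    have hmc : m < c := by
      refine lt_of_le_of_ne chainNext_le fun hmc => ?_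
      rw [hmc] at hm
      nlinarith
    have hnext : (r (m - 1 + 2) : ℝ) < A * t := by
      have := lt_mul_of_chainNext_lt (r := r) (A := A) (Nat.lt_succ_self m) hmc
      rw [show m - 1 + 2 = m + 1 by omega]
      nlinarith
    rw [chain_of_pos (by omega)]
    by_cases htm : t ≤ r (m - 1)
    · exact ⟨m - 1, List.mem_cons_self, htm, by exact_mod_cast hnext⟩
    · have hm' : (r m : ℝ) ≤ r (m - 1) := by exact_mod_cast hr (Nat.sub_le m 1)
      have hr₁ : 1 ≤ r (m - 1) := by exact_mod_cast (show (1 : ℝ) ≤ r (m - 1) by nlinarith)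
      obtain ⟨c', hc', hc't⟩ := ih (m - 1) (by omega) hr₁ (not_le.mp htm)
      exact ⟨c', List.mem_cons_of_mem _ hc', hc't⟩

end Chain

lemma exists_wellSpaced_cover {r : ℕ → ℕ} {A a : ℝ} {N : ℕ} (hr : Antitone r)
    (hN : r (N + 1) = 0) (hA : 1 < A) (haA : a ≤ A) :
    ∃ l₁ l₂ : List ℕ, l₁.Pairwise (WellSpaced r a) ∧ l₂.Pairwise (WellSpaced r a) ∧
      ∀ t, 0 < t → A * t ≤ r 2 → ∃ c ∈ l₁ ++ l₂, t ≤ r c ∧ r (c + 2) < A * t := by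
  by_cases h₀ : 1 ≤ r 0
  · set c₀ := Nat.findGreatest (fun e => 1 ≤ r e) N
    have hc₀ : 1 ≤ r c₀ := Nat.findGreatest_spec (P := fun e => 1 ≤ r e) (Nat.zero_le N) h₀
    have hc₀' : r (c₀ + 1) = 0 := by
      rcases Nat.lt_or_ge N (c₀ + 1) with h | h
      · rwa [show c₀ = N by have := Nat.findGreatest_le (P := fun e => 1 ≤ r e) N; omega]
      · have := Nat.findGreatest_is_greatest (P := fun e => 1 ≤ r e) (Nat.lt_succ_self c₀) h
        exact Nat.lt_one_iff.mp (not_le.mp this)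
    obtain ⟨hl₁, hl₂⟩ := pairwise_wellSpaced_altSplit_chain hr hA haA hc₀
    refine ⟨_, _, hl₁, hl₂, fun t ht htr => ?_⟩
    suffices ∃ c ∈ c₀ :: chain r A c₀, t ≤ r c ∧ r (c + 2) < A * t by
      obtain ⟨c, hc, hct⟩ := this
      exact ⟨c, List.mem_append.mpr (mem_altSplit_iff.mpr hc), hct⟩
    by_cases htc : t ≤ r c₀
    · refine ⟨c₀, List.mem_cons_self, htc, ?_⟩
      have : r (c₀ + 2) = 0 := Nat.le_zero.mp (hc₀' ▸ hr (Nat.le_succ _))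
      rw [this, Nat.cast_zero]
      positivity
    · obtain ⟨c, hc, hct⟩ := exists_mem_chain_cover hr hA hc₀ (not_le.mp htc) htr
      exact ⟨c, List.mem_cons_of_mem _ hc, hct⟩
  · refine ⟨[], [], List.Pairwise.nil, List.Pairwise.nil, fun t ht htr => ?_⟩
    have : r 2 = 0 := by have := hr (Nat.zero_le 2); omega
    rw [this, Nat.cast_zero] at htr
    nlinarith

namespace FinMatroid

/-- Condition (3) of the theorem. -/
def IsSparseStepCurve (M : FinMatroid α) (a b : ℝ) (ρ : ℝ → ℝ) : Prop :=
  (∀ t, 0 < t → ρ t ≤ M.rdCurve t) ∧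
    AntitoneOn ρ (Set.Ioi 0) ∧ (∀ t, 0 < t → 0 ≤ ρ t) ∧
    (∀ t, 0 < t → ρ t ≠ 0 → ∃ k : ℕ, ρ t = b ^ k) ∧
    ∃ (ℓ : ℕ) (μ : Fin ℓ → ℝ), StrictAnti μ ∧
      (∀ y : ℝ, (y ≠ 0 ∧ ∃ t, 0 < t ∧ ρ t = y) ↔ ∃ j, μ j = y) ∧
      ∀ (j : ℕ) (hj : j + 1 < ℓ),
        a * (M.r (M.D M.E (μ ⟨j, Nat.lt_of_succ_lt hj⟩ / b)) : ℝ) ≤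
          (M.r (M.D M.E (μ ⟨j + 1, hj⟩)) : ℝ)

variable {M : FinMatroid α} {a b : ℝ} {l : List ℕ}

lemma stepCurve_powRank_le_rdCurve (hb : 0 ≤ b) {t : ℝ} (ht : 0 < t) :
    stepCurve (M.powRank b) b l t ≤ M.rdCurve t := by
  induction l with
  | nil => exact M.rdCurve_nonneg t
  | cons c l ih =>
    unfold stepCurve
    split_ifs with htc
    · exact pow_le_rdCurve hb ht htc
    · exact ih

lemma isSparseStepCurve_stepCurve (hb : 1 < b) (hl : l.Pairwise (WellSpaced (M.powRank b) a)) :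
    M.IsSparseStepCurve a b (stepCurve (M.powRank b) b l) := by
  have hb₀ : 0 ≤ b := zero_le_one.trans hb.le
  refine ⟨fun t ht => stepCurve_powRank_le_rdCurve hb₀ ht,
    ((stepCurve_antitone hb.le (hl.imp fun h => h.1)).antitoneOn _),
    fun t _ => stepCurve_nonneg hb₀, fun t _ h => ?_, ?_⟩
  · obtain ⟨c, -, hc, -⟩ := exists_mem_eq_pow_of_stepCurve_ne_zero h
    exact ⟨c, hc⟩
  -- the nonzero values are the `b ^ c` for the exponents `c` of positive rank
  set l' := l.filter fun c => 0 < M.powRank b c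
  have hl' : l'.Pairwise (WellSpaced (M.powRank b) a) := hl.filter _
  have hmem : ∀ {c}, c ∈ l' ↔ c ∈ l ∧ 0 < M.powRank b c := by simp [l']
  refine ⟨l'.length, fun j => b ^ l'[j], fun j k hjk => ?_, fun y => ⟨?_, ?_⟩, fun j hj => ?_⟩
  · exact pow_lt_pow_right₀ hb (List.pairwise_iff_getElem.mp hl' j k j.2 k.2 hjk).1
  · rintro ⟨hy, t, ht, rfl⟩
    obtain ⟨c, hc, hval, htc⟩ := exists_mem_eq_pow_of_stepCurve_ne_zero hy
    obtain ⟨i, hi, hic⟩ := List.mem_iff_getElem.mp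
      (hmem.mpr ⟨hc, by exact_mod_cast ht.trans_le htc⟩)
    exact ⟨⟨i, hi⟩, by simp only [Fin.getElem_fin, hic, hval]⟩
  · rintro ⟨j, rfl⟩
    obtain ⟨hc, hpos⟩ := hmem.mp (List.getElem_mem j.2)
    exact ⟨by positivity, M.powRank b l'[j], by exact_mod_cast hpos,
      stepCurve_apply_of_mem (hl.imp fun h => h.2.1) hc⟩
  · obtain ⟨hvu, -, hspace⟩ :=
      List.pairwise_iff_getElem.mp hl' j (j + 1) (Nat.lt_of_succ_lt hj) hj (Nat.lt_succ_self j)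
    show a * (M.r (M.D M.E (b ^ l'[j] / b)) : ℝ) ≤ M.r (M.D M.E (b ^ l'[j + 1]))
    obtain ⟨u, hu⟩ : ∃ u, l'[j] = u + 1 := ⟨l'[j] - 1, by omega⟩
    rw [hu, Nat.add_sub_cancel] at hspace
    rwa [hu, pow_succ, mul_div_cancel_right₀ _ (by positivity)]

end FinMatroid

section Downshift

variable {ρ : ℝ → ℝ} {a b : ℝ}

lemma downshift_eq_of_le_one {t : ℝ} (ht : t ≤ 1) : downshift ρ a b t = downshift ρ a b 1 := by
  simp only [downshift, if_pos ht, if_pos le_rfl]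

lemma downshift_le_of_one_le {t y : ℝ} (ht : 1 ≤ t) (hpos : 0 < ρ (a * t) / b → 1 ≤ y)
    (hle : ρ (a * t) / b ≤ y) : downshift ρ a b t ≤ y := by
  have hφ : (if t ≤ 1 then ρ a / b else ρ (a * t) / b) = ρ (a * t) / b := by
    split_ifs with h
    · rw [le_antisymm h ht, mul_one]
    · rfl
  simp only [downshift, hφ]
  split_ifs with h
  exacts [hpos h.1, hle]

lemma isApprox_of_downshift_le {g : ℝ → ℝ} (hanti : AntitoneOn g (Set.Ioi 0))
    (hnonneg : ∀ t, 0 < t → 0 ≤ g t) (hle : ∀ t, 0 < t → g t ≤ ρ t)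
    (hdown : ∀ t, 1 ≤ t → downshift ρ a b t ≤ g t) : IsApprox a b ρ g := by
  refine ⟨hanti, hnonneg, fun t ht => ⟨?_, hle t ht⟩⟩
  rcases le_total 1 t with h | h
  · exact hdown t h
  · rw [downshift_eq_of_le_one h]
    exact (hdown 1 le_rfl).trans (hanti ht (Set.mem_Ioi.mpr one_pos) h)

end Downshift

namespace FinMatroid

variable {M : FinMatroid α} {A b : ℝ}

lemma downshift_rdCurve_le (hb : 1 < b) (hA : 1 ≤ A) {t y : ℝ} (ht : 1 ≤ t) (hy₀ : 0 ≤ y)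
    (hy₁ : t ≤ M.r M.E → 1 ≤ y)
    (hcover : A * t ≤ M.powRank b 2 →
      ∃ c, t ≤ M.powRank b c ∧ M.powRank b (c + 2) < A * t ∧ b ^ c ≤ y) :
    downshift M.rdCurve A (b ^ 2) t ≤ y := by
  have hb₀ : 0 ≤ b := zero_le_one.trans hb.le
  have hb₂ : 0 < b ^ 2 := by positivity
  have hunit : 0 < M.rdCurve (A * t) → 1 ≤ y := fun h =>
    hy₁ ((le_mul_of_one_le_left (by linarith) hA).trans (le_rank_of_rdCurve_pos h))
  refine downshift_le_of_one_le ht (fun h => hunit ((div_pos_iff_of_pos_right hb₂).mp h)) ?_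
  by_cases hρ : M.rdCurve (A * t) ≤ b ^ 2
  · rcases (M.rdCurve_nonneg (A * t)).eq_or_lt with h | h
    · rwa [← h, zero_div]
    · exact ((div_le_one hb₂).mpr hρ).trans (hunit h)
  · obtain ⟨c, htc, hc₂, hcy⟩ := hcover (le_powRank_of_pow_lt_rdCurve hb₀ (not_le.mp hρ))
    rw [div_le_iff₀ hb₂]
    calc M.rdCurve (A * t) ≤ b ^ (c + 2) := rdCurve_le_pow hb₀ hc₂
      _ = b ^ c * b ^ 2 := pow_add b c 2
      _ ≤ y * b ^ 2 := by gcongr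

lemma isApprox_sup'_stepCurve {ι : Type*} [Fintype ι] [Nonempty ι] (hb : 1 < b) (hA : 1 ≤ A)
    {L : ι → List ℕ} (hL : ∀ i, (L i).Pairwise (· > ·)) (hunit : ∃ i, 0 ∈ L i)
    (hcover : ∀ t, 1 ≤ t → A * t ≤ M.powRank b 2 →
      ∃ i, ∃ c ∈ L i, t ≤ M.powRank b c ∧ M.powRank b (c + 2) < A * t) :
    IsApprox A (b ^ 2) M.rdCurve
      fun t => Finset.univ.sup' Finset.univ_nonempty fun i => stepCurve (M.powRank b) b (L i) t := by
  set ρ := fun i => stepCurve (M.powRank b) b (L i)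
  have hb₀ : 0 ≤ b := zero_le_one.trans hb.le
  have hle_sup : ∀ i t, ρ i t ≤ Finset.univ.sup' Finset.univ_nonempty (ρ · t) :=
    fun i t => Finset.le_sup' (ρ · t) (Finset.mem_univ i)
  obtain ⟨i₀, hi₀⟩ := hunit
  refine isApprox_of_downshift_le
    (fun s _ t _ hst => Finset.sup'_le _ _ fun i _ =>
      (stepCurve_antitone hb.le (hL i) hst).trans (hle_sup i s))
    (fun t _ => (stepCurve_nonneg hb₀).trans (hle_sup i₀ t))
    (fun t ht => Finset.sup'_le _ _ fun i _ => stepCurve_powRank_le_rdCurve hb₀ ht)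
    fun t ht => downshift_rdCurve_le hb hA ht ((stepCurve_nonneg hb₀).trans (hle_sup i₀ t))
      (fun htr => ?_) fun htr => ?_
  · have h := pow_le_stepCurve hb.le (hL i₀) hi₀ (show t ≤ M.powRank b 0 by rwa [powRank_zero])
    rw [pow_zero] at h
    exact h.trans (hle_sup i₀ t)
  · obtain ⟨i, c, hc, htc, hc₂⟩ := hcover t ht htr
    exact ⟨c, htc, hc₂, (pow_le_stepCurve hb.le (hL i) hc htc).trans (hle_sup i t)⟩

end FinMatroid

theorem statement10_general {α : Type*} [DecidableEq α] (n : ℕ) (w : Fin n → ℝ)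
    (M : FinMatroid α)
    (a : ℝ) (ha : 24 ≤ a) (b : ℕ) (hb : 3 ≤ b) :
    ∃ ρbar ρbar1 ρbar2 ρbar3 ρbar4 : ℝ → ℝ,
      IsApprox (a ^ 2) ((b : ℝ) ^ 2) M.rdCurve ρbar ∧
      FF n w ρbar ≤ FF n w ρbar1 + FF n w ρbar2 + FF n w ρbar3 + FF n w ρbar4 ∧
      ∀ ρi ∈ [ρbar1, ρbar2, ρbar3, ρbar4],
        (∀ t, 0 < t → ρi t ≤ M.rdCurve t) ∧
        AntitoneOn ρi (Set.Ioi 0) ∧ (∀ t, 0 < t → 0 ≤ ρi t) ∧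
        (∀ t, 0 < t → ρi t ≠ 0 → ∃ k : ℕ, ρi t = (b : ℝ) ^ k) ∧
        ∃ (ℓ : ℕ) (μ : Fin ℓ → ℝ), StrictAnti μ ∧
          (∀ y : ℝ, (y ≠ 0 ∧ ∃ t, 0 < t ∧ ρi t = y) ↔ ∃ j, μ j = y) ∧
          ∀ (j : ℕ) (hj : j + 1 < ℓ),
            a * (M.r (M.D M.E (μ ⟨j, Nat.lt_of_succ_lt hj⟩ / (b : ℝ))) : ℝ) ≤
              (M.r (M.D M.E (μ ⟨j + 1, hj⟩)) : ℝ) := by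
  have hb₂ : (2 : ℝ) ≤ b := by exact_mod_cast (by omega : 2 ≤ b)
  have hb₁ : (1 : ℝ) < b := by linarith
  obtain ⟨l₁, l₂, hl₁, hl₂, hcover⟩ := exists_wellSpaced_cover (M.powRank_antitone hb₁.le)
    (M.powRank_card_succ hb₂) (show 1 < a ^ 2 by nlinarith) (show a ≤ a ^ 2 by nlinarith)
  set L : Fin 4 → List ℕ := ![l₁, l₂, [0], []]
  have hL : ∀ i, (L i).Pairwise (WellSpaced (M.powRank b) a) := by
    intro i
    fin_cases i
    exacts [hl₁, hl₂, List.pairwise_singleton _ _, List.Pairwise.nil]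
  set ρ : Fin 4 → ℝ → ℝ := fun i => stepCurve (M.powRank b) b (L i)
  refine ⟨fun t => Finset.univ.sup' Finset.univ_nonempty (ρ · t), ρ 0, ρ 1, ρ 2, ρ 3, ?_, ?_, ?_⟩
  · refine FinMatroid.isApprox_sup'_stepCurve (M := M) hb₁ (by nlinarith)
      (fun i => (hL i).imp And.left) ⟨2, List.mem_singleton_self 0⟩ fun t ht htr => ?_
    obtain ⟨c, hc, hct⟩ := hcover t (by linarith) htr
    rcases List.mem_append.mp hc with hc | hc
    exacts [⟨0, c, hc, hct⟩, ⟨1, c, hc, hct⟩]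
  · exact (FF_sup'_le_sum fun i => integrableOn_eta_stepCurve _ _ (L i)).trans_eq
      (Fin.sum_univ_four _)
  · simp only [List.mem_cons, List.not_mem_nil, or_false]
    rintro _ (rfl | rfl | rfl | rfl) <;> exact FinMatroid.isSparseStepCurve_stepCurve hb₁ (hL _)

theorem statement10 {α : Type*} [DecidableEq α] (n : ℕ) (w : Fin n → ℝ)
    (hw : ∀ i, 0 ≤ w i) (M : FinMatroid α) (hk : M.E.card ≤ n)
    (a : ℝ) (ha : 24 ≤ a) (b : ℕ) (hb : 3 ≤ b)
    (ρt : ℝ → ℝ) (happrox : IsApprox a (b : ℝ) M.rdCurve ρt) :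
    ∃ ρbar ρbar1 ρbar2 ρbar3 ρbar4 : ℝ → ℝ,
      IsApprox (a ^ 2) ((b : ℝ) ^ 2) M.rdCurve ρbar ∧
      FF n w ρbar ≤ FF n w ρbar1 + FF n w ρbar2 + FF n w ρbar3 + FF n w ρbar4 ∧
      ∀ ρi ∈ [ρbar1, ρbar2, ρbar3, ρbar4],
        (∀ t, 0 < t → ρi t ≤ M.rdCurve t) ∧
        AntitoneOn ρi (Set.Ioi 0) ∧ (∀ t, 0 < t → 0 ≤ ρi t) ∧
        (∀ t, 0 < t → ρi t ≠ 0 → ∃ k : ℕ, ρi t = (b : ℝ) ^ k) ∧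
        ∃ (ℓ : ℕ) (μ : Fin ℓ → ℝ), StrictAnti μ ∧
          (∀ y : ℝ, (y ≠ 0 ∧ ∃ t, 0 < t ∧ ρi t = y) ↔ ∃ j, μ j = y) ∧
          ∀ (j : ℕ) (hj : j + 1 < ℓ),
            a * (M.r (M.D M.E (μ ⟨j, Nat.lt_of_succ_lt hj⟩ / (b : ℝ))) : ℝ) ≤
              (M.r (M.D M.E (μ ⟨j + 1, hj⟩)) : ℝ) :=
  statement10_general n w M a ha b hb
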